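/- Let c_1,...,c_L ∈ [q]^n and let x_1,...,x_L ∈ (∂Δ_ℓ)^n be their images under the coordinatewise embedding φ_ℓ. Then rad_ℓ(c_1,...,c_L) ≤ rad(x_1,...,x_L) + L/n, where rad denotes the relaxed ℓ-radius. -/

import Mathlib

open Finset

/-- A probability distribution on a finite type. -/
def IsDist {α : Type*} [Fintype α] (P : α → ℝ) : Prop :=
  (∀ a, 0 ≤ P a) ∧ ∑ a, P a = 1

/-- The collection `X` of `ℓ`-element subsets of `[q]`. -/
abbrev Subsets (q ℓ : ℕ) := {A : Finset (Fin q) // A.card = ℓ}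

/-- The list-recovery distance between `x ∈ [q]^n` and a tuple of `ℓ`-subsets. -/
def dLR {q ℓ n : ℕ} (x : Fin n → Fin q) (Y : Fin n → Subsets q ℓ) : ℕ :=
  (Finset.univ.filter fun j => x j ∉ (Y j).1).card

/-- The `ℓ`-radius `rad_ℓ(c₁,…,c_L) = (1/n) min_{Y∈Xⁿ} max_i d_LR(cᵢ,Y)`. -/
noncomputable def radLtuple {q n L : ℕ} (ℓ : ℕ) (cs : Fin L → Fin n → Fin q) : ℝ :=
  (1 / (n : ℝ)) * ⨅ Y : Fin n → Subsets q ℓ, ⨆ i : Fin L, (dLR (cs i) Y : ℝ)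

/-- The embedding `φ_ℓ : [q] → ∂Δ_ℓ`, `φ_ℓ(i) = ∑_{A∈X : i∈A} e_A`. -/
noncomputable def phiL (q ℓ : ℕ) (i : Fin q) : Subsets q ℓ → ℝ :=
  fun A => if i ∈ A.1 then 1 else 0

/-- `d(x,y) = ∑_j (1/2)(‖x(j) − y(j)‖₁ − C(q−1,ℓ−1) + 1)` on blocks in `ℝ^X`. -/
noncomputable def dvecL {q ℓ n : ℕ} (x y : Fin n → Subsets q ℓ → ℝ) : ℝ :=
  ∑ j, (1 / 2) * ((∑ A : Subsets q ℓ, |x j A - y j A|) - ((q - 1).choose (ℓ - 1) : ℝ) + 1)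

/-- The relaxed `ℓ`-radius `rad(x₁,…,x_L) = (1/n) inf_{y∈Δ_ℓⁿ} max_i d(xᵢ,y)`. -/
noncomputable def radRelaxL {q ℓ n L : ℕ} (xs : Fin L → Fin n → Subsets q ℓ → ℝ) : ℝ :=
  (1 / (n : ℝ)) *
    sInf {r : ℝ | ∃ y : Fin n → Subsets q ℓ → ℝ, (∀ j, IsDist (y j)) ∧ r = ⨆ i, dvecL (xs i) y}

/-!
Writing `p j a` for the `y j`-probability that a random `ℓ`-subset contains `a`, each row `p j`
lies in the hypersimplex `{x ∈ [0,1]^q | ∑ x = ℓ}` and `d(φ_ℓ(c), y) = ∑ j, (1 - p j (c j))`.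
As long as more than `L` rows have a fractional entry, there is a nonzero direction supported on
fractional entries that keeps the row sums and all `L` agreements `∑ j, p j (c_i j)`; moving along
it until an entry reaches `0` or `1` removes a fractional entry. When at most `L` rows are
fractional, the integral rows are `ℓ`-subsets that realise `p` exactly, and each fractional row
costs at most one extra error.
-/

def MemHypersimplex {α : Type*} [Fintype α] (ℓ : ℕ) (x : α → ℝ) : Prop :=
  (∀ a, x a ∈ Set.Icc (0 : ℝ) 1) ∧ ∑ a, x a = ℓ

section Marginal

variable {q ℓ : ℕ}

def marginal (η : Subsets q ℓ → ℝ) (a : Fin q) : ℝ :=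
  ∑ A : Subsets q ℓ, if a ∈ A.1 then η A else 0

lemma isDist_pi_single {α : Type*} [Fintype α] [DecidableEq α] (a : α) :
    IsDist (Pi.single a (1 : ℝ)) :=
  ⟨fun b => by by_cases h : b = a <;> simp [h], by simp [sum_pi_single']⟩

lemma IsDist.le_one {α : Type*} [Fintype α] {η : α → ℝ} (hη : IsDist η) (a : α) : η a ≤ 1 :=
  hη.2 ▸ single_le_sum (fun b _ => hη.1 b) (mem_univ a)

lemma sum_subsets_indicator_mem (hℓ : 1 ≤ ℓ) (a : Fin q) :
    ∑ A : Subsets q ℓ, (if a ∈ A.1 then (1 : ℝ) else 0) = (q - 1).choose (ℓ - 1) := by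
  rw [← sum_subtype (powersetCard ℓ univ) (fun B => mem_powersetCard_univ)
    (fun B => if a ∈ B then (1 : ℝ) else 0), ← natCast_card_filter]
  simpa using card_filter_powersetCard_subset {a} univ ℓ (by simp) (by simpa)

lemma IsDist.marginal_memHypersimplex {η : Subsets q ℓ → ℝ} (hη : IsDist η) :
    MemHypersimplex ℓ (marginal η) := by
  refine ⟨fun a => ⟨sum_nonneg fun A _ => ?_, (sum_le_sum fun A _ => ?_).trans hη.2.le⟩, ?_⟩
  · split_ifs <;> simp [hη.1 A]
  · split_ifs <;> simp [hη.1 A]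
  · have hA : ∀ A : Subsets q ℓ, ∑ a, (if a ∈ A.1 then η A else 0) = ℓ * η A := fun A => by
      rw [sum_ite_mem, univ_inter, sum_const, A.2, nsmul_eq_mul]
    simp only [marginal]
    rw [sum_comm, sum_congr rfl fun A _ => hA A, ← mul_sum, hη.2, mul_one]

lemma half_dist_phiL (hℓ : 1 ≤ ℓ) (a : Fin q) {η : Subsets q ℓ → ℝ} (hη : IsDist η) :
    (1 / 2) * ((∑ A : Subsets q ℓ, |phiL q ℓ a A - η A|) - ((q - 1).choose (ℓ - 1) : ℝ) + 1)
      = 1 - marginal η a := by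
  have habs : ∀ A : Subsets q ℓ, |phiL q ℓ a A - η A|
      = (if a ∈ A.1 then 1 else 0) + η A - 2 * (if a ∈ A.1 then η A else 0) := fun A => by
    by_cases h : a ∈ A.1
    · simp only [phiL, h, ↓reduceIte, abs_of_nonneg (sub_nonneg.2 (hη.le_one A))]
      ring
    · simp [phiL, h, abs_of_nonneg (hη.1 A)]
  simp only [marginal]
  rw [sum_congr rfl fun A _ => habs A, sum_sub_distrib, sum_add_distrib, ← mul_sum,
    sum_subsets_indicator_mem hℓ, hη.2]
  ring

lemma dvecL_phiL {n : ℕ} (hℓ : 1 ≤ ℓ) (c : Fin n → Fin q) {y : Fin n → Subsets q ℓ → ℝ}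
    (hy : ∀ j, IsDist (y j)) :
    dvecL (fun j => phiL q ℓ (c j)) y = ∑ j, (1 - marginal (y j) (c j)) :=
  sum_congr rfl fun j _ => half_dist_phiL hℓ (c j) (hy j)

end Marginal

noncomputable def fractionalIndices {ι : Type*} [Fintype ι] (x : ι → ℝ) : Finset ι :=
  univ.filter fun i => x i ∈ Set.Ioo 0 1

@[simp] lemma mem_fractionalIndices {ι : Type*} [Fintype ι] {x : ι → ℝ} {i : ι} :
    i ∈ fractionalIndices x ↔ x i ∈ Set.Ioo 0 1 := by
  simp [fractionalIndices]

section ExitTime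

/-- The time at which `t ↦ v + t * d` leaves `[0, 1]` (junk value `0` when `d = 0`). -/
noncomputable def exitTime (v d : ℝ) : ℝ :=
  if 0 < d then (1 - v) / d else -v / d

variable {v d t : ℝ}

lemma exitTime_nonneg (hv : v ∈ Set.Icc 0 1) : 0 ≤ exitTime v d := by
  unfold exitTime
  split_ifs with hd
  · exact div_nonneg (by linarith [hv.2]) hd.le
  · exact div_nonneg_of_nonpos (by linarith [hv.1]) (not_lt.1 hd)

lemma add_mul_mem_Icc_of_le_exitTime (hv : v ∈ Set.Icc 0 1) (ht₀ : 0 ≤ t)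
    (ht : t ≤ exitTime v d) : v + t * d ∈ Set.Icc 0 1 := by
  unfold exitTime at ht
  rcases lt_trichotomy d 0 with hd | rfl | hd
  · rw [if_neg hd.not_gt, le_div_iff_of_neg hd] at ht
    constructor <;> nlinarith [hv.1, hv.2]
  · simpa using hv
  · rw [if_pos hd, le_div_iff₀ hd] at ht
    constructor <;> nlinarith [hv.1, hv.2]

lemma add_exitTime_mul_notMem_Ioo (hd : d ≠ 0) : v + exitTime v d * d ∉ Set.Ioo 0 1 := by
  unfold exitTime
  split_ifs with hd'
  · simp [div_mul_cancel₀ _ hd]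
  · simp [div_mul_cancel₀ _ hd]

/-- Moving along `δ` until the first coordinate it moves reaches `0` or `1`. -/
lemma exists_add_mul_mem_Icc_ssubset {ι : Type*} [Fintype ι] {x δ : ι → ℝ}
    (hx : ∀ i, x i ∈ Set.Icc 0 1) (hδ : ∀ i, δ i ≠ 0 → x i ∈ Set.Ioo 0 1) (hδ₀ : δ ≠ 0) :
    ∃ t : ℝ, (∀ i, x i + t * δ i ∈ Set.Icc 0 1) ∧
      fractionalIndices (fun i => x i + t * δ i) ⊂ fractionalIndices x := by
  obtain ⟨i₀, hi₀, hmin⟩ := exists_min_image {i | δ i ≠ 0} (fun i => exitTime (x i) (δ i))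
    (by simpa [Finset.Nonempty, Function.ne_iff] using hδ₀)
  rw [mem_filter_univ] at hi₀
  refine ⟨exitTime (x i₀) (δ i₀), fun i => ?_, ?_⟩
  · by_cases hi : δ i = 0
    · simpa [hi] using hx i
    · exact add_mul_mem_Icc_of_le_exitTime (hx i) (exitTime_nonneg (hx i₀))
        (hmin i ((mem_filter_univ _).2 hi))
  · have hsub : fractionalIndices (fun i => x i + exitTime (x i₀) (δ i₀) * δ i) ⊆
        fractionalIndices x := fun i hi => by
      by_cases h : δ i = 0
      · simpa [h] using hi
      · exact mem_fractionalIndices.2 (hδ i h)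
    rw [ssubset_iff_of_subset hsub]
    exact ⟨i₀, mem_fractionalIndices.2 (hδ i₀ hi₀),
      by simpa using add_exitTime_mul_notMem_Ioo hi₀⟩

end ExitTime

section Hypersimplex

variable {α : Type*} [Fintype α] {ℓ : ℕ} {x : α → ℝ}

lemma eq_zero_or_eq_one_of_notMem_fractionalIndices (hx : ∀ a, x a ∈ Set.Icc 0 1) {a : α}
    (ha : a ∉ fractionalIndices x) : x a = 0 ∨ x a = 1 := by
  have : x a ∈ Set.Icc (0 : ℝ) 1 \ Set.Ioo 0 1 := ⟨hx a, by simpa using ha⟩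
  simpa [Set.Icc_sdiff_Ioo_same zero_le_one] using this

lemma MemHypersimplex.card_filter_eq_one (hx : MemHypersimplex ℓ x)
    (hint : fractionalIndices x = ∅) : #(univ.filter fun a => x a = 1) = ℓ := by
  have hsum : ∑ a, x a = #(univ.filter fun a => x a = 1) := by
    rw [natCast_card_filter]
    refine sum_congr rfl fun a _ => ?_
    rcases eq_zero_or_eq_one_of_notMem_fractionalIndices hx.1 (a := a) (by simp [hint]) with
      h | h <;> simp [h]
  exact_mod_cast hsum.symm.trans hx.2

/-- The entries of a point of the hypersimplex sum to an integer, so they cannot all be integral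
but one. -/
lemma MemHypersimplex.exists_ne_mem_fractionalIndices [DecidableEq α] (hx : MemHypersimplex ℓ x)
    {a : α} (ha : a ∈ fractionalIndices x) : ∃ b ≠ a, b ∈ fractionalIndices x := by
  by_contra! h
  set m := #((univ.erase a).filter fun b => x b = 1)
  have hm : ∑ b ∈ univ.erase a, x b = m := by
    rw [natCast_card_filter]
    refine sum_congr rfl fun b hb => ?_
    rcases eq_zero_or_eq_one_of_notMem_fractionalIndices hx.1 (h b (ne_of_mem_erase hb)) with
      h | h <;> simp [h]
  have hxa : x a = ((ℓ - m : ℤ) : ℝ) := by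
    push_cast
    linarith [sum_erase_add univ x (mem_univ a), hx.2]
  rw [mem_fractionalIndices, hxa] at ha
  have h₀ : (0 : ℤ) < ℓ - m := by exact_mod_cast ha.1
  have h₁ : (ℓ - m : ℤ) < 1 := by exact_mod_cast ha.2
  omega

end Hypersimplex

section SingleDiff

variable {ι α : Type*} [DecidableEq ι] [DecidableEq α]

def singleDiff (j : ι) (a b : α) : ι → α → ℝ :=
  Pi.single j (Pi.single a 1 - Pi.single b 1)

lemma sum_singleDiff_apply [Fintype α] (j : ι) (a b : α) (j' : ι) :
    ∑ c, singleDiff j a b j' c = 0 := by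
  by_cases h : j' = j
  · subst h
    simp [singleDiff, sum_sub_distrib, sum_pi_single']
  · simp [singleDiff, h]

lemma singleDiff_apply_ne_zero {j j' : ι} {a b c : α} (h : singleDiff j a b j' c ≠ 0) :
    j' = j ∧ (c = a ∨ c = b) := by
  by_cases hj : j' = j
  · subst hj
    refine ⟨rfl, ?_⟩
    by_contra! hc
    simp [singleDiff, hc.1, hc.2] at h
  · simp [singleDiff, hj] at h

lemma singleDiff_apply_of_ne {j j' : ι} (h : j' ≠ j) (a b : α) : singleDiff j a b j' = 0 := by
  simp [singleDiff, h]

lemma singleDiff_apply_self {a b : α} (h : a ≠ b) (j : ι) : singleDiff j a b j a = 1 := by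
  simp [singleDiff, h.symm]

end SingleDiff

section Rows

variable {ι α : Type*} [Fintype ι] [Fintype α] [DecidableEq ι] {ℓ : ℕ}

noncomputable def fractionalCoords (p : ι → α → ℝ) : Finset ι :=
  (fractionalIndices (Function.uncurry p)).image Prod.fst

lemma mem_fractionalCoords {p : ι → α → ℝ} {j : ι} :
    j ∈ fractionalCoords p ↔ ∃ a, a ∈ fractionalIndices (p j) := by
  simp [fractionalCoords]

/-- Each fractional coordinate `j` has two fractional entries `a ≠ b`; more than `card κ` vectors
`(𝟙[c i j = a] - 𝟙[c i j = b])_i` in `ℝ^κ` are linearly dependent, and a dependence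
combines the moves `e_{j,a} - e_{j,b}` into the direction. -/
lemma exists_direction_preserving_agreements [DecidableEq α] {κ : Type*} [Fintype κ]
    (c : κ → ι → α) {p : ι → α → ℝ} (hp : ∀ j, MemHypersimplex ℓ (p j))
    (hcard : Fintype.card κ < #(fractionalCoords p)) :
    ∃ δ : ι → α → ℝ, δ ≠ 0 ∧ (∀ j a, δ j a ≠ 0 → a ∈ fractionalIndices (p j)) ∧
      (∀ j, ∑ a, δ j a = 0) ∧ ∀ i, ∑ j, δ j (c i j) = 0 := by
  have htwo : ∀ j : fractionalCoords p, ∃ a b, a ≠ b ∧ a ∈ fractionalIndices (p j) ∧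
      b ∈ fractionalIndices (p j) := fun j => by
    obtain ⟨a, ha⟩ := mem_fractionalCoords.1 j.2
    obtain ⟨b, hba, hb⟩ := (hp j).exists_ne_mem_fractionalIndices ha
    exact ⟨a, b, hba.symm, ha, hb⟩
  choose a b hab ha hb using htwo
  obtain ⟨g, hg, k₀, hk₀⟩ : ∃ g : fractionalCoords p → ℝ,
      ∑ k, g k • (fun i => ∑ j, singleDiff k.1 (a k) (b k) j (c i j)) = 0 ∧ ∃ k, g k ≠ 0 :=
    Fintype.not_linearIndependent_iff.1 fun hli => by
      have := hli.fintype_card_le_finrank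
      simp only [Fintype.card_coe, Module.finrank_fintype_fun_eq_card] at this
      omega
  obtain ⟨δ, hδ⟩ : ∃ δ : ι → α → ℝ,
      ∀ j c', δ j c' = ∑ k, g k * singleDiff k.1 (a k) (b k) j c' := ⟨_, fun _ _ => rfl⟩
  have hδk₀ : δ k₀ (a k₀) = g k₀ := by
    rw [hδ, sum_eq_single k₀ _ (by simp), singleDiff_apply_self (hab k₀), mul_one]
    intro k _ hk
    rw [singleDiff_apply_of_ne (fun h => hk (Subtype.ext h).symm), Pi.zero_apply, mul_zero]
  refine ⟨δ, fun h0 => hk₀ (hδk₀ ▸ congrFun₂ h0 k₀.1 (a k₀)), fun j c' h => ?_,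
    fun j => ?_, fun i => ?_⟩
  · rw [hδ] at h
    obtain ⟨k, -, hk⟩ := exists_ne_zero_of_sum_ne_zero h
    obtain ⟨rfl, rfl | rfl⟩ := singleDiff_apply_ne_zero (right_ne_zero_of_mul hk)
    exacts [ha k, hb k]
  · simp only [hδ]
    rw [sum_comm]
    simp [← mul_sum, sum_singleDiff_apply]
  · simp only [hδ]
    rw [sum_comm]
    simpa [← mul_sum] using congrFun hg i

lemma exists_fractionalIndices_ssubset [DecidableEq α] {κ : Type*} [Fintype κ]
    (c : κ → ι → α) {p : ι → α → ℝ} (hp : ∀ j, MemHypersimplex ℓ (p j))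
    (hcard : Fintype.card κ < #(fractionalCoords p)) :
    ∃ p' : ι → α → ℝ, (∀ j, MemHypersimplex ℓ (p' j)) ∧
      (∀ i, ∑ j, p' j (c i j) = ∑ j, p j (c i j)) ∧
      fractionalIndices (Function.uncurry p') ⊂ fractionalIndices (Function.uncurry p) := by
  obtain ⟨δ, hδ₀, hsupp, hrow, hagr⟩ := exists_direction_preserving_agreements c hp hcard
  obtain ⟨t, hbox, hss⟩ := exists_add_mul_mem_Icc_ssubset (x := Function.uncurry p)
    (δ := Function.uncurry δ) (fun x => (hp x.1).1 x.2)
    (fun x hx => (mem_fractionalIndices (x := p x.1)).1 (hsupp x.1 x.2 hx))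
    (fun h => hδ₀ (funext₂ fun j a => congrFun h (j, a)))
  refine ⟨fun j a => p j a + t * δ j a, fun j => ⟨fun a => hbox (j, a), ?_⟩, fun i => ?_, hss⟩
  · rw [sum_add_distrib, ← mul_sum, hrow, mul_zero, add_zero, (hp j).2]
  · rw [sum_add_distrib, ← mul_sum, hagr, mul_zero, add_zero]

lemma exists_card_fractionalCoords_le [DecidableEq α] {κ : Type*} [Fintype κ]
    (c : κ → ι → α) {p : ι → α → ℝ} (hp : ∀ j, MemHypersimplex ℓ (p j)) :
    ∃ p' : ι → α → ℝ, (∀ j, MemHypersimplex ℓ (p' j)) ∧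
      (∀ i, ∑ j, p' j (c i j) = ∑ j, p j (c i j)) ∧
      #(fractionalCoords p') ≤ Fintype.card κ := by
  induction hN : #(fractionalIndices (Function.uncurry p)) using Nat.strong_induction_on
    generalizing p with
  | _ N ih =>
  by_cases hF : #(fractionalCoords p) ≤ Fintype.card κ
  · exact ⟨p, hp, fun _ => rfl, hF⟩
  obtain ⟨p₁, hp₁, hagr₁, hss⟩ := exists_fractionalIndices_ssubset c hp (not_le.1 hF)
  obtain ⟨p₂, hp₂, hagr₂, hle⟩ := ih _ (hN ▸ card_lt_card hss) hp₁ rfl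
  exact ⟨p₂, hp₂, fun i => (hagr₂ i).trans (hagr₁ i), hle⟩

end Rows

lemma subsets_nonempty {q ℓ : ℕ} (h : ℓ ≤ q) : Nonempty (Subsets q ℓ) :=
  let ⟨A, _, hA⟩ := exists_subset_card_eq (s := (univ : Finset (Fin q))) (by simpa using h)
  ⟨⟨A, hA⟩⟩

/-- Integral rows are read off as `ℓ`-subsets with no loss; each fractional row costs at most one
more error. -/
lemma exists_dLR_le {q ℓ n : ℕ} [Nonempty (Subsets q ℓ)] {p : Fin n → Fin q → ℝ}
    (hp : ∀ j, MemHypersimplex ℓ (p j)) :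
    ∃ Y : Fin n → Subsets q ℓ, ∀ c : Fin n → Fin q,
      (dLR c Y : ℝ) ≤ ∑ j, (1 - p j (c j)) + #(fractionalCoords p) := by
  have hint : ∀ j ∉ fractionalCoords p, fractionalIndices (p j) = ∅ := fun j hj => by
    simpa [mem_fractionalCoords, eq_empty_iff_forall_notMem] using hj
  let Y : Fin n → Subsets q ℓ := fun j => if hj : j ∈ fractionalCoords p then Classical.arbitrary _
    else ⟨univ.filter fun a => p j a = 1, (hp j).card_filter_eq_one (hint j hj)⟩
  refine ⟨Y, fun c => ?_⟩
  have hterm : ∀ j, (if c j ∉ (Y j).1 then (1 : ℝ) else 0)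
      ≤ (1 - p j (c j)) + if j ∈ fractionalCoords p then 1 else 0 := fun j => by
    by_cases hj : j ∈ fractionalCoords p
    · have := (hp j).1 (c j)
      simp only [hj, if_true]
      split_ifs <;> linarith [this.1, this.2]
    · rcases eq_zero_or_eq_one_of_notMem_fractionalIndices (hp j).1 (a := c j)
        (by simp [hint j hj]) with h | h <;> simp [Y, hj, h]
  calc (dLR c Y : ℝ) = ∑ j, if c j ∉ (Y j).1 then (1 : ℝ) else 0 := natCast_card_filter _ _
    _ ≤ ∑ j, ((1 - p j (c j)) + if j ∈ fractionalCoords p then 1 else 0) :=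
      sum_le_sum fun j _ => hterm j
    _ = _ := by simp [sum_add_distrib]

lemma exists_dLR_le_dvecL_add {q ℓ n L : ℕ} (hℓ : 1 ≤ ℓ) [Nonempty (Subsets q ℓ)]
    (cs : Fin L → Fin n → Fin q) {y : Fin n → Subsets q ℓ → ℝ} (hy : ∀ j, IsDist (y j)) :
    ∃ Y : Fin n → Subsets q ℓ, ∀ i,
      (dLR (cs i) Y : ℝ) ≤ dvecL (fun j => phiL q ℓ (cs i j)) y + L := by
  obtain ⟨p, hp, hagr, hcard⟩ :=
    exists_card_fractionalCoords_le cs fun j => (hy j).marginal_memHypersimplex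
  obtain ⟨Y, hY⟩ := exists_dLR_le hp
  refine ⟨Y, fun i => (hY (cs i)).trans ?_⟩
  rw [dvecL_phiL hℓ (cs i) hy, sum_sub_distrib, sum_sub_distrib, hagr i]
  simpa using (Nat.cast_le (α := ℝ)).2 (hcard.trans_eq (Fintype.card_fin L))

lemma iSup_le_iSup_add_of_le_add {ι : Type*} [Finite ι] {f g : ι → ℝ} {c : ℝ} (hc : 0 ≤ c)
    (h : ∀ i, f i ≤ g i + c) : ⨆ i, f i ≤ (⨆ i, g i) + c := by
  cases isEmpty_or_nonempty ι
  · simpa using hc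
  · exact ciSup_le fun i => (h i).trans
      ((add_le_add_iff_right c).2 (le_ciSup (Set.finite_range g).bddAbove i))

theorem radL_le_radRelaxL_add_general (q ℓ n L : ℕ) (hl1 : 1 ≤ ℓ) (hlq : ℓ < q)
    (cs : Fin L → Fin n → Fin q) :
    radLtuple ℓ cs ≤ radRelaxL (fun i j => phiL q ℓ (cs i j)) + (L : ℝ) / n := by
  have := subsets_nonempty hlq.le
  set S := {r : ℝ | ∃ y : Fin n → Subsets q ℓ → ℝ, (∀ j, IsDist (y j)) ∧
    r = ⨆ i, dvecL (fun j => phiL q ℓ (cs i j)) y}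
  have hS : S.Nonempty :=
    ⟨_, fun _ => Pi.single (Classical.arbitrary _) 1, fun _ => isDist_pi_single _, rfl⟩
  have hbdd : BddBelow (Set.range fun Y : Fin n → Subsets q ℓ => ⨆ i, (dLR (cs i) Y : ℝ)) :=
    ⟨0, Set.forall_mem_range.2 fun Y => Real.iSup_nonneg fun i => Nat.cast_nonneg _⟩
  have hinf_le : (⨅ Y : Fin n → Subsets q ℓ, ⨆ i, (dLR (cs i) Y : ℝ)) ≤ sInf S + L := by
    rw [← sub_le_iff_le_add]
    refine le_csInf hS ?_
    rintro r ⟨y, hy, rfl⟩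
    obtain ⟨Y, hY⟩ := exists_dLR_le_dvecL_add hl1 cs hy
    exact sub_le_iff_le_add.2
      ((ciInf_le hbdd Y).trans (iSup_le_iSup_add_of_le_add L.cast_nonneg hY))
  calc radLtuple ℓ cs ≤ (1 / (n : ℝ)) * (sInf S + L) :=
        mul_le_mul_of_nonneg_left hinf_le (by positivity)
    _ = _ := by rw [radRelaxL]; ring

theorem radL_le_radRelaxL_add (q ℓ n L : ℕ) (hq : 2 ≤ q) (hl1 : 1 ≤ ℓ) (hlq : ℓ < q)
    (hn : 1 ≤ n) (hL : 2 ≤ L) (cs : Fin L → Fin n → Fin q) :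
    radLtuple ℓ cs ≤ radRelaxL (fun i j => phiL q ℓ (cs i j)) + (L : ℝ) / n :=
  radL_le_radRelaxL_add_general q ℓ n L hl1 hlq cs
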